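/- Coercivity of the rescaled discrete Stokes–Biot form: with $\mathbb{G}_\epsilon$ defined as in the context, for all $(\mathbf{u},\boldsymbol\eta,p) \in \mathcal{V}^\epsilon_F \times \mathcal{V}^\epsilon_B \times \mathcal{X}^\epsilon$ one has $\mathbb{G}_\epsilon((\mathbf{u},\boldsymbol\eta,p),(\mathbf{u},\boldsymbol\eta,p)) \ge D\,\|(\mathbf{u},\boldsymbol\eta,p)\|^2_{\mathcal{V}^\epsilon_F\times\mathcal{V}^\epsilon_B\times\mathcal{X}^\epsilon}$ with $D = \min\{2\mu_F/C^F_K,\ 2\mu_B/(C^B_K\Delta t),\ c_0/\Delta t,\ k_*\}$, where $C^F_K, C^B_K$ are the weighted Korn constants. In particular, the cross-coupling terms involving $\alpha$, the interface integrals with $\nabla\mathrm{dist}_\Gamma$, and the Beavers–Joseph–Saffman terms all cancel or contribute nonnegatively when testing with the solution itself. -/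

import Mathlib

/-!
Testing the form with the solution itself, the coupling terms cancel and the mass and
Beavers–Joseph–Saffman terms are nonnegative, so they can be dropped. What remains is the
viscous, elastic and Darcy dissipation, and the Korn and Poincaré inequalities bound each of
these from below by a multiple of the corresponding squared norm, with a weight at least `D`.
-/

lemma div_mul_le_mul_of_le_mul {m C t a : ℝ} (hm : 0 ≤ m) (hC : 0 < C) (h : t ≤ C * a) :
    m / C * t ≤ m * a :=
  calc m / C * t ≤ m / C * (C * a) := by gcongr
    _ = m * a := by field_simp

lemma mul_add_add_le_of_le {D a b c x y z : ℝ} (ha : D ≤ a) (hb : D ≤ b) (hc : D ≤ c)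
    (hx : 0 ≤ x) (hy : 0 ≤ y) (hz : 0 ≤ z) :
    D * (x + y + z) ≤ a * x + b * y + c * z := by
  have := mul_le_mul_of_nonneg_right ha hx
  have := mul_le_mul_of_nonneg_right hb hy
  have := mul_le_mul_of_nonneg_right hc hz
  linarith

theorem rescaled_form_coercivity_general {VF VB Xp : Type*}
    [NormedAddCommGroup VF] [InnerProductSpace ℝ VF]
    [NormedAddCommGroup VB] [InnerProductSpace ℝ VB]
    [NormedAddCommGroup Xp] [InnerProductSpace ℝ Xp]
    (ρF ρB c0 μF μB kstar Δt CKF CKB : ℝ)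
    (hρF : 0 < ρF) (hρB : 0 < ρB) (hc0 : 0 < c0) (hμF : 0 < μF)
    (hΔt : 0 < Δt)
    (hCKF : 0 < CKF) (hCKB : 0 < CKB)
    (aF : VF → VF → ℝ) (aE : VB → VB → ℝ) (aK : Xp → Xp → ℝ)
    (Ccpl Sbjs G : VF × VB × Xp → VF × VB × Xp → ℝ)
    (hKornF : ∀ u : VF, ‖u‖ ^ 2 ≤ CKF * aF u u)
    (hKornB : ∀ η : VB, 2 * μB * ‖η‖ ^ 2 ≤ CKB * aE η η)
    (hDarcy : ∀ p : Xp, kstar * ‖p‖ ^ 2 ≤ aK p p)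
    (hcpl : ∀ z, Ccpl z z = 0)
    (hbjs : ∀ z, 0 ≤ Sbjs z z)
    (hG : ∀ (u v : VF) (η φ : VB) (p q : Xp),
      G (u, η, p) (v, φ, q) =
        ρF / Δt * (inner ℝ u v : ℝ) + ρB / Δt ^ 3 * (inner ℝ η φ : ℝ)
          + c0 / Δt * (inner ℝ p q : ℝ)
          + 2 * μF * aF u v + (1 / Δt) * aE η φ + aK p q
          + Ccpl (u, η, p) (v, φ, q) + Sbjs (u, η, p) (v, φ, q)) :
    ∀ (u : VF) (η : VB) (p : Xp),
      min (min (2 * μF / CKF) (2 * μB / (CKB * Δt))) (min (c0 / Δt) kstar)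
          * (‖u‖ ^ 2 + ‖η‖ ^ 2 + ‖p‖ ^ 2)
        ≤ G (u, η, p) (u, η, p) := by
  intro u η p
  have hviscous : 2 * μF / CKF * ‖u‖ ^ 2 ≤ 2 * μF * aF u u :=
    div_mul_le_mul_of_le_mul (by positivity) hCKF (hKornF u)
  have helastic : 2 * μB / (CKB * Δt) * ‖η‖ ^ 2 ≤ 1 / Δt * aE η η :=
    calc 2 * μB / (CKB * Δt) * ‖η‖ ^ 2 = 1 / Δt / CKB * (2 * μB * ‖η‖ ^ 2) := by ring
      _ ≤ 1 / Δt * aE η η := div_mul_le_mul_of_le_mul (by positivity) hCKB (hKornB η)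
  have hdissipation :
      min (min (2 * μF / CKF) (2 * μB / (CKB * Δt))) (min (c0 / Δt) kstar)
          * (‖u‖ ^ 2 + ‖η‖ ^ 2 + ‖p‖ ^ 2)
        ≤ 2 * μF * aF u u + 1 / Δt * aE η η + aK p p :=
    (mul_add_add_le_of_le ((min_le_left _ _).trans (min_le_left _ _))
      ((min_le_left _ _).trans (min_le_right _ _)) ((min_le_right _ _).trans (min_le_right _ _))
      (by positivity) (by positivity) (by positivity)).trans
      (by linarith [hDarcy p])
  rw [hG, hcpl]
  have hmass : 0 ≤ ρF / Δt * (inner ℝ u u : ℝ) + ρB / Δt ^ 3 * (inner ℝ η η : ℝ)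
      + c0 / Δt * (inner ℝ p p : ℝ) := by
    simp only [real_inner_self_eq_norm_sq]
    positivity
  linarith [hbjs (u, η, p)]

/-- Coercivity of the rescaled discrete Stokes–Biot form `𝔾_ε`. Abstract
setting: Hilbert spaces `VF` (fluid velocities), `VB` (displacements), `Xp`
(Biot pressures); `aF`, `aE`, `aK` are the viscous, elastic and Darcy forms,
related to the full norms by the weighted Korn inequalities
`‖u‖² ≤ C_K^F aF(u,u)`, `2μ_B ‖η‖² ≤ C_K^B aE(η,η)` and the spectral/Poincaré
bound `k_* ‖p‖² ≤ aK(p,p)`; `Ccpl` collects the antisymmetric coupling terms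
(pressure–displacement coupling and interface integrals with `∇ dist_Γ`),
which vanish on the diagonal, and `Sbjs` is the nonnegative
Beavers–Joseph–Saffman term. Then
`𝔾_ε(z, z) ≥ D ‖z‖²` with
`D = min{2μ_F/C_K^F, 2μ_B/(C_K^B Δt), c₀/Δt, k_*}`. -/
theorem rescaled_form_coercivity {VF VB Xp : Type*}
    [NormedAddCommGroup VF] [InnerProductSpace ℝ VF]
    [NormedAddCommGroup VB] [InnerProductSpace ℝ VB]
    [NormedAddCommGroup Xp] [InnerProductSpace ℝ Xp]
    (ρF ρB c0 μF μB kstar Δt CKF CKB : ℝ)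
    (hρF : 0 < ρF) (hρB : 0 < ρB) (hc0 : 0 < c0) (hμF : 0 < μF)
    (hμB : 0 < μB) (hk : 0 < kstar) (hΔt : 0 < Δt)
    (hCKF : 0 < CKF) (hCKB : 0 < CKB)
    (aF : VF → VF → ℝ) (aE : VB → VB → ℝ) (aK : Xp → Xp → ℝ)
    (Ccpl Sbjs G : VF × VB × Xp → VF × VB × Xp → ℝ)
    (hKornF : ∀ u : VF, ‖u‖ ^ 2 ≤ CKF * aF u u)
    (hKornB : ∀ η : VB, 2 * μB * ‖η‖ ^ 2 ≤ CKB * aE η η)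
    (hDarcy : ∀ p : Xp, kstar * ‖p‖ ^ 2 ≤ aK p p)
    (hcpl : ∀ z, Ccpl z z = 0)
    (hbjs : ∀ z, 0 ≤ Sbjs z z)
    (hG : ∀ (u v : VF) (η φ : VB) (p q : Xp),
      G (u, η, p) (v, φ, q) =
        ρF / Δt * (inner ℝ u v : ℝ) + ρB / Δt ^ 3 * (inner ℝ η φ : ℝ)
          + c0 / Δt * (inner ℝ p q : ℝ)
          + 2 * μF * aF u v + (1 / Δt) * aE η φ + aK p q
          + Ccpl (u, η, p) (v, φ, q) + Sbjs (u, η, p) (v, φ, q)) :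
    ∀ (u : VF) (η : VB) (p : Xp),
      min (min (2 * μF / CKF) (2 * μB / (CKB * Δt))) (min (c0 / Δt) kstar)
          * (‖u‖ ^ 2 + ‖η‖ ^ 2 + ‖p‖ ^ 2)
        ≤ G (u, η, p) (u, η, p) :=
  rescaled_form_coercivity_general ρF ρB c0 μF μB kstar Δt CKF CKB hρF hρB hc0 hμF hΔt hCKF hCKB aF
    aE aK Ccpl Sbjs G hKornF hKornB hDarcy hcpl hbjs hG
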